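/- The half-period of the generalized sine function satisfies π̂/2 = ∫_0^1 dt/(1-t^p)^{1/p} = π/(p sin(π/p)) for every p > 1. -/

import Mathlib

/-!
The substitution `t = x ^ (1 / p)` turns `∫_0^1 (1 - t^p)^(b - 1) dt` into the Euler integral
`(1 / p) B(1 / p, b) = Γ(1 / p) Γ(b) / (p Γ(1 / p + b))`. For `b = 1 - 1 / p` this is
`Γ(1 / p) Γ(1 - 1 / p) / p`, and the reflection formula `Γ(s) Γ(1 - s) = π / sin (π s)` gives
`π / (p sin (π / p))`.
-/

open Real

/-- `π̂ = 2 ∫_0^1 dt/(1-t^p)^{1/p}`. -/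
noncomputable def pihat (p : ℝ) : ℝ := 2 * ∫ t in (0:ℝ)..1, (1 - t ^ p) ^ (-(1 / p))

open MeasureTheory Set

theorem integral_comp_rpow_Ioo_zero_one {E : Type*} [NormedAddCommGroup E] [NormedSpace ℝ E]
    (g : ℝ → E) {q : ℝ} (hq : 0 < q) :
    ∫ x in Ioo 0 1, (q * x ^ (q - 1)) • g (x ^ q) = ∫ y in Ioo 0 1, g y := by
  have himage : (· ^ q) '' Ioo 0 1 = Ioo (0 : ℝ) 1 := by
    rw [(continuous_rpow_const hq.le).continuousOn.image_Ioo_of_strictMonoOn zero_le_one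
      ((strictMonoOn_rpow_Ici_of_exponent_pos hq).mono Icc_subset_Ici_self), zero_rpow hq.ne',
      one_rpow]
  conv_rhs => rw [← himage, integral_image_eq_integral_abs_deriv_smul measurableSet_Ioo
    (fun x hx ↦ (hasDerivAt_rpow_const (Or.inl hx.1.ne')).hasDerivWithinAt)
    ((rpow_left_injOn hq.ne').mono fun x hx ↦ le_of_lt hx.1) g]
  refine setIntegral_congr_fun measurableSet_Ioo fun x hx ↦ ?_
  rw [abs_of_pos (mul_pos hq (rpow_pos_of_pos hx.1 _))]

theorem integral_rpow_mul_one_sub_rpow {a b : ℝ} (ha : 0 < a) (hb : 0 < b) :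
    ∫ x in (0:ℝ)..1, x ^ (a - 1) * (1 - x) ^ (b - 1) = Gamma a * Gamma b / Gamma (a + b) := by
  have hcpow : EqOn (fun x : ℝ ↦ ((x ^ (a - 1) * (1 - x) ^ (b - 1) : ℝ) : ℂ))
      (fun x ↦ (x : ℂ) ^ ((a : ℂ) - 1) * (1 - (x : ℂ)) ^ ((b : ℂ) - 1)) (uIcc 0 1) := by
    intro x hx
    rw [uIcc_of_le zero_le_one] at hx
    push_cast
    rw [Complex.ofReal_cpow hx.1, Complex.ofReal_cpow (sub_nonneg.2 hx.2)]
    push_cast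
    ring
  apply Complex.ofReal_injective
  rw [← intervalIntegral.integral_ofReal, intervalIntegral.integral_congr hcpow,
    ← Complex.betaIntegral, Complex.betaIntegral_eq_Gamma_mul_div _ _ (by simpa) (by simpa),
    ← Complex.ofReal_add]
  simp only [Complex.Gamma_ofReal, Complex.ofReal_mul, Complex.ofReal_div]

theorem integral_one_sub_rpow_rpow {p b : ℝ} (hp : 0 < p) (hb : 0 < b) :
    ∫ t in (0:ℝ)..1, (1 - t ^ p) ^ (b - 1) =
      Gamma (1 / p) * Gamma b / (p * Gamma (1 / p + b)) := by
  rw [intervalIntegral.integral_of_le zero_le_one, integral_Ioc_eq_integral_Ioo]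
  calc ∫ t in Ioo 0 1, (1 - t ^ p) ^ (b - 1)
      = ∫ x in Ioo 0 1, (1 / p * x ^ (1 / p - 1)) • (1 - (x ^ (1 / p)) ^ p) ^ (b - 1) :=
        (integral_comp_rpow_Ioo_zero_one _ (by positivity)).symm
    _ = ∫ x in Ioo 0 1, 1 / p * (x ^ (1 / p - 1) * (1 - x) ^ (b - 1)) := by
        refine setIntegral_congr_fun measurableSet_Ioo fun x hx ↦ ?_
        rw [smul_eq_mul, ← rpow_mul hx.1.le, one_div_mul_cancel hp.ne', rpow_one, mul_assoc]
    _ = _ := by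
        rw [integral_const_mul, ← integral_Ioc_eq_integral_Ioo,
          ← intervalIntegral.integral_of_le zero_le_one,
          integral_rpow_mul_one_sub_rpow (by positivity) hb]
        ring

/-- the half-period of the generalized sine satisfies
`π̂/2 = ∫_0^1 dt/(1-t^p)^{1/p} = π/(p sin(π/p))` for every `p > 1`. -/
theorem pihat_half_eq (p : ℝ) (hp : 1 < p) :
    pihat p / 2 = ∫ t in (0:ℝ)..1, (1 - t ^ p) ^ (-(1 / p)) ∧
    (∫ t in (0:ℝ)..1, (1 - t ^ p) ^ (-(1 / p))) = π / (p * Real.sin (π / p)) := by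
  refine ⟨mul_div_cancel_left₀ _ two_ne_zero, ?_⟩
  have hp0 : 0 < p := zero_lt_one.trans hp
  have h := integral_one_sub_rpow_rpow hp0 (b := 1 - 1 / p)
    (sub_pos.2 ((div_lt_one hp0).2 hp))
  rw [sub_sub_cancel_left, add_sub_cancel, Gamma_one, mul_one, Gamma_mul_Gamma_one_sub] at h
  rw [h, mul_one_div]
  ring
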